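/- Let H be a subgroup of a finite group G and A a normal subgroup of G. Then H is pronormal in G if and only if HA is pronormal in G and H is pronormal in N_G(HA). -/

import Mathlib

/-- The conjugate subgroup `g H g⁻¹`. -/
def conjSub {G : Type*} [Group G] (g : G) (H : Subgroup G) : Subgroup G :=
  H.map (MulAut.conj g).toMonoidHom

/-- `H` is pronormal in `G`: for every `g`, `H` and `H^g` are conjugate in `⟨H, H^g⟩`. -/
def IsPronormal {G : Type*} [Group G] (H : Subgroup G) : Prop :=
  ∀ g : G, ∃ x ∈ H ⊔ conjSub g H, conjSub x H = conjSub g H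

/-- `n` is a `π`-number: all its prime divisors lie in `π`. -/
def IsPiNumber (π : Set ℕ) (n : ℕ) : Prop :=
  ∀ p : ℕ, p.Prime → p ∣ n → p ∈ π

/-- `n` is a `π'`-number: none of its prime divisors lies in `π`. -/
def IsPiPrimeNumber (π : Set ℕ) (n : ℕ) : Prop :=
  ∀ p : ℕ, p.Prime → p ∣ n → p ∉ π

/-- `H` is a `π`-Hall subgroup: its order is a `π`-number and its index a `π'`-number. -/
def IsHall {G : Type*} [Group G] (π : Set ℕ) (H : Subgroup G) : Prop :=
  IsPiNumber π (Nat.card H) ∧ IsPiPrimeNumber π H.index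

/-- A group is `π`-separable if it has a normal series each of whose factors is a
`π`-group or a `π'`-group. -/
def IsPiSeparable (π : Set ℕ) (G : Type*) [Group G] : Prop :=
  ∃ n : ℕ, ∃ s : Fin (n + 1) → Subgroup G,
    Monotone s ∧ s 0 = ⊥ ∧ s (Fin.last n) = ⊤ ∧
    (∀ i, (s i).Normal) ∧
    ∀ i : Fin n,
      IsPiNumber π (Nat.card (s i.succ) / Nat.card (s i.castSucc)) ∨
      IsPiPrimeNumber π (Nat.card (s i.succ) / Nat.card (s i.castSucc))

/-- The `A`-conjugacy class `{H^a : a ∈ A}` of a subgroup `H`. -/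
def conjClassOn {G : Type*} [Group G] (A : Subgroup G) (H : Subgroup G) : Set (Subgroup G) :=
  {K | ∃ a ∈ A, K = conjSub a H}

/-- The `G`-conjugacy class `{H^g : g ∈ G}` of a subgroup `H`. -/
def conjClass {G : Type*} [Group G] (H : Subgroup G) : Set (Subgroup G) :=
  {K | ∃ g : G, K = conjSub g H}
open scoped Pointwise

namespace ConjAux
variable {G : Type*} [Group G]


lemma mem_conjSub {g x : G} {H : Subgroup G} :
    x ∈ conjSub g H ↔ ∃ h ∈ H, g * h * g⁻¹ = x := by
  simp [conjSub, Subgroup.mem_map, MulAut.conj_apply]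

lemma conjSub_conjSub (a b : G) (H : Subgroup G) :
    conjSub a (conjSub b H) = conjSub (a * b) H := by
  unfold conjSub
  rw [Subgroup.map_map]
  congr 1
  ext x
  simp [MulAut.conj_apply, mul_assoc]

lemma conjSub_sup (g : G) (H K : Subgroup G) :
    conjSub g (H ⊔ K) = conjSub g H ⊔ conjSub g K :=
  Subgroup.map_sup H K _

lemma conjSub_mono (g : G) {H K : Subgroup G} (h : H ≤ K) :
    conjSub g H ≤ conjSub g K :=
  Subgroup.map_mono h

lemma conjSub_self (g : G) {K : Subgroup G} (hg : g ∈ K) : conjSub g K = K := by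
  ext x
  rw [mem_conjSub]
  constructor
  · rintro ⟨h, hh, rfl⟩
    exact K.mul_mem (K.mul_mem hg hh) (K.inv_mem hg)
  · intro hx
    refine ⟨g⁻¹ * x * g, ?_, by group⟩
    exact K.mul_mem (K.mul_mem (K.inv_mem hg) hx) hg

lemma conjSub_one (K : Subgroup G) : conjSub 1 K = K := conjSub_self 1 K.one_mem

lemma conjSub_normal (g : G) {A : Subgroup G} (hA : A.Normal) : conjSub g A = A := by
  ext x
  rw [mem_conjSub]
  constructor
  · rintro ⟨h, hh, rfl⟩
    exact hA.conj_mem h hh g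
  · intro hx
    exact ⟨g⁻¹ * x * g, by simpa using hA.conj_mem x hx g⁻¹, by group⟩

lemma conjSub_eq_iff {n : G} {K : Subgroup G} :
    conjSub n K = K ↔ n ∈ Subgroup.normalizer (K : Set G) := by
  rw [Subgroup.mem_normalizer_iff]
  constructor
  · intro h x
    constructor
    · intro hx
      rw [← h, mem_conjSub]; exact ⟨x, hx, rfl⟩
    · intro hx
      rw [← h, mem_conjSub] at hx
      obtain ⟨y, hy, hxy⟩ := hx
      have : y = x := mul_left_cancel (mul_right_cancel hxy)
      subst this; exact hy
  · intro h
    ext x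
    rw [mem_conjSub]
    constructor
    · rintro ⟨y, hy, rfl⟩; exact (h y).mp hy
    · intro hx
      refine ⟨n⁻¹ * x * n, ?_, by group⟩
      refine (h (n⁻¹ * x * n)).mpr ?_
      have e : n * (n⁻¹ * x * n) * n⁻¹ = x := by group
      rw [e]; exact hx

lemma conjSub_map_subtype (N : Subgroup G) (m : N) (K : Subgroup N) :
    (conjSub m K).map N.subtype = conjSub (↑m) (K.map N.subtype) := by
  unfold conjSub
  rw [Subgroup.map_map, Subgroup.map_map]
  congr 1

end ConjAux

open ConjAux in
theorem stmt_10 {G : Type*} [Group G] [Finite G] (H A : Subgroup G) (hA : A.Normal) :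
    IsPronormal H ↔
      IsPronormal (H ⊔ A) ∧ IsPronormal (H.subgroupOf (Subgroup.normalizer ((H ⊔ A : Subgroup G) : Set G))) := by
  set N := Subgroup.normalizer ((H ⊔ A : Subgroup G) : Set G) with hNdef
  have hHN : H ≤ N := le_trans le_sup_left Subgroup.le_normalizer
  have hmapH : (H.subgroupOf N).map N.subtype = H := by
    rw [Subgroup.subgroupOf_map_subtype, inf_eq_left.mpr hHN]
  constructor
  · intro hpro
    constructor
    · intro g
      obtain ⟨x, hx, hconj⟩ := hpro g
      refine ⟨x, ?_, ?_⟩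
      · exact (sup_le_sup le_sup_left (conjSub_mono g le_sup_left)) hx
      · rw [conjSub_sup, conjSub_sup, hconj, conjSub_normal x hA, conjSub_normal g hA]
    · intro n
      obtain ⟨x, hx, hconj⟩ := hpro ↑n
      have hn : conjSub (↑n : G) (H ⊔ A) = H ⊔ A := conjSub_eq_iff.mpr n.2
      have hgH : conjSub (↑n : G) H ≤ N :=
        le_trans (le_trans (conjSub_mono _ le_sup_left) hn.le) Subgroup.le_normalizer
      have hxN : x ∈ N := (sup_le hHN hgH) hx
      have hmapcn : (conjSub n (H.subgroupOf N)).map N.subtype = conjSub (↑n : G) H := by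
        rw [conjSub_map_subtype, hmapH]
      have hsup : (H.subgroupOf N ⊔ conjSub n (H.subgroupOf N)).map N.subtype
          = H ⊔ conjSub (↑n : G) H := by
        rw [Subgroup.map_sup, hmapH, hmapcn]
      have hx' : x ∈ (H.subgroupOf N ⊔ conjSub n (H.subgroupOf N)).map N.subtype := by
        rw [hsup]; exact hx
      obtain ⟨y, hy, hyx⟩ := hx'
      refine ⟨y, hy, ?_⟩
      apply Subgroup.map_injective N.subtype_injective
      rw [conjSub_map_subtype, conjSub_map_subtype, hmapH]
      rw [show ((y : G)) = x from hyx, hconj]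
  · rintro ⟨hHA, hN⟩ g
    haveI := hA
    obtain ⟨x, hx, hconj⟩ := hHA g
    set K := H ⊔ conjSub g H with hK
    have hmem : x ∈ K ⊔ A := by
      have e : (H ⊔ A) ⊔ conjSub g (H ⊔ A) = K ⊔ A := by
        rw [conjSub_sup, conjSub_normal g hA, hK, sup_sup_sup_comm, sup_idem]
      rw [← e]; exact hx
    have hmem' : x ∈ ((K : Set G) * (A : Set G)) := by
      rw [← Subgroup.mul_normal K A]; exact hmem
    obtain ⟨k, hk, a, ha, hka⟩ := hmem'
    have hconjk : conjSub k (H ⊔ A) = conjSub g (H ⊔ A) := by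
      have e1 : conjSub x (H ⊔ A) = conjSub k (H ⊔ A) := by
        rw [← hka, ← conjSub_conjSub, conjSub_self a (le_sup_right (a := H) ha)]
      rw [← e1, hconj]
    have hnN : k⁻¹ * g ∈ N := by
      apply conjSub_eq_iff.mp
      rw [← conjSub_conjSub, ← hconjk, conjSub_conjSub, inv_mul_cancel, conjSub_one]
    obtain ⟨m, hm, hmc⟩ := hN ⟨k⁻¹ * g, hnN⟩
    have hmc' : conjSub (↑m : G) H = conjSub (k⁻¹ * g) H := by
      have := congrArg (Subgroup.map N.subtype) hmc
      rwa [conjSub_map_subtype, conjSub_map_subtype, hmapH] at this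
    have hm' : (↑m : G) ∈ H ⊔ conjSub (k⁻¹ * g) H := by
      have : (↑m : G) ∈ (H.subgroupOf N ⊔ conjSub (⟨k⁻¹ * g, hnN⟩ : N) (H.subgroupOf N)).map
          N.subtype := ⟨m, hm, rfl⟩
      rwa [Subgroup.map_sup, hmapH, conjSub_map_subtype, hmapH] at this
    have hsub : conjSub (k⁻¹ * g) H ≤ K := by
      rw [← conjSub_conjSub]
      calc conjSub k⁻¹ (conjSub g H) ≤ conjSub k⁻¹ K := conjSub_mono _ le_sup_right
        _ = K := conjSub_self _ (K.inv_mem hk)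
    have hmK : (↑m : G) ∈ K := (sup_le le_sup_left hsub) hm'
    refine ⟨k * ↑m, K.mul_mem hk hmK, ?_⟩
    rw [← conjSub_conjSub, hmc', conjSub_conjSub]
    congr 1
    group
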